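/- arXiv:2002.05030 — 10 statements merged into one kernel-verified Lean document; each statement's English description precedes it below -/
import Mathlib

section
/- Let Z be an integral domain, P_1,...,P_s ∈ Z[y] nonzero polynomials, and δ ∈ Z nonzero with δ ∈ (Σ_i P_i·Z[y]) ∩ Z. For m ∈ Z let D_m denote the set of common divisors of P_1(m),...,P_s(m) in Z. Then for all m, ℓ ∈ Z one has D_m = D_{m+ℓδ}. -/
open Polynomial

theorem stmt_2 {Z : Type*} [CommRing Z] [IsDomain Z]
    (s : ℕ) (P : Fin s → Polynomial Z) (hP0 : ∀ i, P i ≠ 0)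
    (δ : Z) (hδ : δ ≠ 0) (V : Fin s → Polynomial Z)
    (hbezout : ∑ i, V i * P i = Polynomial.C δ) :
    ∀ m ℓ : Z,
      {d : Z | ∀ i, d ∣ (P i).eval m} =
      {d : Z | ∀ i, d ∣ (P i).eval (m + ℓ * δ)} := by
  have key : ∀ m ℓ : Z, ∀ d : Z, (∀ i, d ∣ (P i).eval m) →
      ∀ i, d ∣ (P i).eval (m + ℓ * δ) := by
    intro m ℓ d hd i
    have hdδ : d ∣ δ := by
      have := congrArg (Polynomial.eval m) hbezout
      simp only [eval_finset_sum, eval_mul, eval_C] at this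
      rw [← this]
      exact Finset.dvd_sum fun j _ => Dvd.dvd.mul_left (hd j) _
    have hsub : d ∣ (P i).eval (m + ℓ * δ) - (P i).eval m := by
      have h1 : (m + ℓ * δ) - m ∣ (P i).eval (m + ℓ * δ) - (P i).eval m :=
        Polynomial.sub_dvd_eval_sub _ _ _
      have h2 : d ∣ (m + ℓ * δ) - m := by
        simpa using Dvd.dvd.mul_left hdδ ℓ
      exact h2.trans h1
    simpa using dvd_add hsub (hd i)
  intro m ℓ
  ext d
  simp only [Set.mem_setOf_eq]
  constructor
  · exact key m ℓ d
  · intro h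
    have := key (m + ℓ * δ) (-ℓ) d h
    simpa using this
end

section
/- Let Z be a GCD domain (e.g. a UFD), P_1,...,P_s ∈ Z[y] nonzero, and δ ∈ Z nonzero satisfying δ = Σ_i V_i(y)P_i(y) with V_i ∈ Z[y]. Setting d_m = gcd(P_1(m),...,P_s(m)), one has that d_m and d_{m+ℓδ} are associates for all m, ℓ ∈ Z. -/
open Polynomial

theorem stmt_3 {Z : Type*} [CommRing Z] [IsDomain Z] [GCDMonoid Z]
    (s : ℕ) (P : Fin s → Polynomial Z) (hP0 : ∀ i, P i ≠ 0)
    (δ : Z) (hδ : δ ≠ 0) (V : Fin s → Polynomial Z)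
    (hbezout : ∑ i, V i * P i = Polynomial.C δ) :
    ∀ m ℓ g g' : Z,
      ((∀ i, g ∣ (P i).eval m) ∧ ∀ d : Z, (∀ i, d ∣ (P i).eval m) → d ∣ g) →
      ((∀ i, g' ∣ (P i).eval (m + ℓ * δ)) ∧
        ∀ d : Z, (∀ i, d ∣ (P i).eval (m + ℓ * δ)) → d ∣ g') →
      Associated g g' := by
  intro m ℓ g g' ⟨hg, hgmax⟩ ⟨hg', hg'max⟩
  have key : ∀ a : Z, (∀ i, a ∣ (P i).eval m) → ∀ i, a ∣ (P i).eval (m + ℓ * δ) := by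
    intro a ha i
    have haδ : a ∣ δ := by
      have := congrArg (Polynomial.eval m) hbezout
      simp only [Polynomial.eval_finset_sum, Polynomial.eval_mul, Polynomial.eval_C] at this
      rw [← this]
      exact Finset.dvd_sum fun j _ => Dvd.dvd.mul_left (ha j) _
    have hdiff : (m + ℓ * δ) - m ∣ (P i).eval (m + ℓ * δ) - (P i).eval m :=
      Polynomial.sub_dvd_eval_sub _ _ _
    have : a ∣ (P i).eval (m + ℓ * δ) - (P i).eval m := by
      refine dvd_trans ?_ hdiff
      simpa using Dvd.dvd.mul_left haδ ℓ
    have := dvd_add this (ha i)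
    simpa using this
  have key' : ∀ a : Z, (∀ i, a ∣ (P i).eval (m + ℓ * δ)) → ∀ i, a ∣ (P i).eval m := by
    intro a ha i
    have haδ : a ∣ δ := by
      have := congrArg (Polynomial.eval (m + ℓ * δ)) hbezout
      simp only [Polynomial.eval_finset_sum, Polynomial.eval_mul, Polynomial.eval_C] at this
      rw [← this]
      exact Finset.dvd_sum fun j _ => Dvd.dvd.mul_left (ha j) _
    have hdiff : m - (m + ℓ * δ) ∣ (P i).eval m - (P i).eval (m + ℓ * δ) :=
      Polynomial.sub_dvd_eval_sub _ _ _
    have : a ∣ (P i).eval m - (P i).eval (m + ℓ * δ) := by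
      refine dvd_trans ?_ hdiff
      have : m - (m + ℓ * δ) = -(ℓ * δ) := by ring
      rw [this]
      exact (Dvd.dvd.mul_left haδ ℓ).neg_right
    have := dvd_add this (ha i)
    simpa using this
  exact associated_of_dvd_dvd (hg'max g (key g hg)) (hgmax g' (key' g' hg'))
end

section
/- Let Z be a principal ideal domain with fraction field Q. Let P_1,...,P_s ∈ Z[y] (s ≥ 2) be nonzero polynomials with no common divisor in Q[y], and assume no prime p of Z divides all of P_1(m),...,P_s(m) for every m ∈ Z. Then there exists m ∈ Z such that P_1(m),...,P_s(m) have no common divisor in Z other than units. -/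
/-!
By Bézout in `Q[y]` and clearing denominators, `∑ qᵢ Pᵢ = c` for some `qᵢ ∈ Z[y]` and some
nonzero constant `c ∈ Z`, so every common divisor of the values `Pᵢ(m)` divides `c`. For each of
the finitely many primes `p ∣ c` choose `mₚ` with `p ∤ P_{iₚ}(mₚ)`, and by the Chinese remainder
theorem an `m ≡ mₚ (mod p)` for all of them; then `P_{iₚ}(m) ≡ P_{iₚ}(mₚ) ≢ 0 (mod p)`, so no
prime divides all the `Pᵢ(m)`.
-/

open Polynomial

theorem exists_sum_mul_eq_one_of_forall_dvd_isUnit {R ι : Type*} [CommRing R]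
    [IsPrincipalIdealRing R] [Fintype ι] (f : ι → R)
    (hf : ∀ d, (∀ i, d ∣ f i) → IsUnit d) : ∃ a : ι → R, ∑ i, a i * f i = 1 := by
  rw [← Ideal.mem_span_range_iff_exists_fun]
  obtain ⟨g, hg⟩ := (IsPrincipalIdealRing.principal (Ideal.span (Set.range f))).principal
  have hg_dvd : ∀ i, g ∣ f i := fun i ↦ by
    rw [← Ideal.mem_span_singleton, ← Ideal.submodule_span_eq, ← hg]
    exact Ideal.subset_span ⟨i, rfl⟩
  rw [hg, Ideal.submodule_span_eq, Ideal.span_singleton_eq_top.mpr (hf g hg_dvd)]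
  exact Submodule.mem_top

attribute [local instance] Polynomial.algebra in
theorem Polynomial.exists_sum_mul_eq_C_of_sum_mul_map_eq_one {R S ι : Type*} [CommRing R]
    [CommRing S] [Algebra R S] (M : Submonoid R) [IsLocalization M S] [Fintype ι]
    (f : ι → R[X]) (a : ι → S[X]) (ha : ∑ i, a i * (f i).map (algebraMap R S) = 1) :
    ∃ c ∈ M, ∃ q : ι → R[X], ∑ i, q i * f i = C c := by
  have := Polynomial.isLocalization M S
  obtain ⟨⟨_, c, hc, rfl⟩, hq⟩ :=
    IsLocalization.exist_integer_multiples_of_finite (M.map C) a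
  choose q hq using hq
  have hqc : algebraMap R[X] S[X] (∑ i, q i * f i) = algebraMap R[X] S[X] (C c) := by
    simp only [map_sum, map_mul, hq, smul_mul_assoc, ← Finset.smul_sum]
    simp [Algebra.smul_def, ha]
  obtain ⟨⟨_, t, ht, rfl⟩, htq⟩ := IsLocalization.exists_of_eq (M := M.map C) hqc
  refine ⟨t * c, M.mul_mem ht hc, fun i ↦ C t * q i, ?_⟩
  simpa [mul_assoc, Finset.mul_sum] using htq

theorem dvd_of_sum_mul_eq_C {R ι : Type*} [CommRing R] [Fintype ι] {P q : ι → R[X]}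
    {c : R} (hq : ∑ i, q i * P i = C c) {m d : R} (hd : ∀ i, d ∣ (P i).eval m) : d ∣ c := by
  have hc : c = ∑ i, (q i).eval m * (P i).eval m := by
    simpa [eval_finsetSum] using congrArg (eval m) hq.symm
  exact hc ▸ Finset.dvd_sum fun i _ ↦ (hd i).mul_left _

theorem Ideal.exists_eval_notMem_of_isMaximal {R κ : Type*} [CommRing R] (P : κ → R[X])
    (S : Finset (Ideal R)) (hS : ∀ I ∈ S, I.IsMaximal)
    (h : ∀ I ∈ S, ∃ m i, (P i).eval m ∉ I) : ∃ m, ∀ I ∈ S, ∃ i, (P i).eval m ∉ I := by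
  choose m i hmi using h
  have hcop : Pairwise (Function.onFun IsCoprime fun I : S ↦ (I : Ideal R)) := fun I J hIJ ↦
    Ideal.isCoprime_iff_sup_eq.mpr <|
      (hS _ I.2).coprime_of_ne (hS _ J.2) (Subtype.coe_injective.ne hIJ)
  obtain ⟨m₀, hm₀⟩ := Ideal.exists_forall_sub_mem_ideal hcop fun I ↦ m I I.2
  refine ⟨m₀, fun I hI ↦ ⟨i I hI, fun hm₀I ↦ hmi I hI ?_⟩⟩
  have hdiff : (P (i I hI)).eval m₀ - (P (i I hI)).eval (m I hI) ∈ I :=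
    I.mem_of_dvd (sub_dvd_eval_sub _ _ _) (hm₀ ⟨I, hI⟩)
  simpa using I.sub_mem hm₀I hdiff

theorem exists_eval_forall_not_dvd {R κ : Type*} [CommRing R] [IsDomain R]
    [IsPrincipalIdealRing R] (P : κ → R[X]) (F : Finset R) (hF : ∀ p ∈ F, Prime p)
    (h : ∀ p ∈ F, ∃ m i, ¬ p ∣ (P i).eval m) : ∃ m, ∀ p ∈ F, ∃ i, ¬ p ∣ (P i).eval m := by
  classical
  obtain ⟨m, hm⟩ := Ideal.exists_eval_notMem_of_isMaximal P (F.image fun p ↦ Ideal.span {p})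
    (by simpa using fun p hp ↦
      PrincipalIdealRing.isMaximal_of_irreducible (hF p hp).irreducible)
    (by simpa [Ideal.mem_span_singleton] using h)
  exact ⟨m, by simpa [Ideal.mem_span_singleton] using hm⟩

theorem UniqueFactorizationMonoid.exists_finset_prime_dvd_of_prime_dvd {α : Type*}
    [CommMonoidWithZero α] [UniqueFactorizationMonoid α] {c : α} (hc : c ≠ 0) :
    ∃ F : Finset α, (∀ p ∈ F, Prime p) ∧ ∀ p, Prime p → p ∣ c → ∃ r ∈ F, r ∣ p := by
  classical
  refine ⟨(factors c).toFinset, fun p hp ↦ prime_of_factor p (Multiset.mem_toFinset.mp hp),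
    fun p hp hpc ↦ ?_⟩
  obtain ⟨r, hr, hpr⟩ :=
    hp.exists_mem_multiset_dvd ((factors_prod hc).symm.dvd_iff_dvd_right.mp hpc)
  exact ⟨r, Multiset.mem_toFinset.mpr hr,
    (hp.associated_of_dvd (prime_of_factor r hr) hpr).symm.dvd⟩

theorem stmt_4_general {Z : Type*} [CommRing Z] [IsDomain Z] [IsPrincipalIdealRing Z]
    (s : ℕ) (P : Fin s → Polynomial Z)
    (hcop : ∀ d : Polynomial (FractionRing Z),
      (∀ i, d ∣ (P i).map (algebraMap Z (FractionRing Z))) → IsUnit d)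
    (hAV2 : ∀ p : Z, Prime p → ∃ m : Z, ∃ i, ¬ p ∣ (P i).eval m) :
    ∃ m : Z, ∀ d : Z, (∀ i, d ∣ (P i).eval m) → IsUnit d := by
  obtain ⟨a, ha⟩ := exists_sum_mul_eq_one_of_forall_dvd_isUnit _ hcop
  obtain ⟨c, hc, q, hq⟩ :=
    exists_sum_mul_eq_C_of_sum_mul_map_eq_one (nonZeroDivisors Z) P a ha
  have hc0 : c ≠ 0 := nonZeroDivisors.ne_zero hc
  obtain ⟨F, hFprime, hF⟩ := UniqueFactorizationMonoid.exists_finset_prime_dvd_of_prime_dvd hc0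
  obtain ⟨m, hm⟩ := exists_eval_forall_not_dvd P F hFprime fun p hp ↦ hAV2 p (hFprime p hp)
  refine ⟨m, fun d hd ↦ by_contra fun hdu ↦ ?_⟩
  have hdc : d ∣ c := dvd_of_sum_mul_eq_C hq hd
  obtain ⟨p, hp, hpd⟩ :=
    WfDvdMonoid.exists_irreducible_factor hdu (ne_zero_of_dvd_ne_zero hc0 hdc)
  obtain ⟨r, hrF, hrp⟩ := hF p hp.prime (hpd.trans hdc)
  obtain ⟨i, hi⟩ := hm r hrF
  exact hi (hrp.trans (hpd.trans (hd i)))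

theorem stmt_4 {Z : Type*} [CommRing Z] [IsDomain Z] [IsPrincipalIdealRing Z]
    (s : ℕ) (hs : 2 ≤ s) (P : Fin s → Polynomial Z)
    (hP0 : ∀ i, P i ≠ 0)
    (hcop : ∀ d : Polynomial (FractionRing Z),
      (∀ i, d ∣ (P i).map (algebraMap Z (FractionRing Z))) → IsUnit d)
    (hAV2 : ∀ p : Z, Prime p → ∃ m : Z, ∃ i, ¬ p ∣ (P i).eval m) :
    ∃ m : Z, ∀ d : Z, (∀ i, d ∣ (P i).eval m) → IsUnit d :=
  stmt_4_general s P hcop hAV2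
end

section
/- Let Z be an integral domain in which every quotient Z/pZ by a prime principal ideal is infinite, and let P_1,...,P_s ∈ Z[y] be nonzero polynomials (s ≥ 1). Then the following are equivalent: (i) there exists a prime p of Z dividing ∏_{i=1}^s P_i(m) for every m ∈ Z; (ii) some P_i is divisible in Z[y] by a prime element of Z. -/
open Polynomial

theorem stmt_6 {Z : Type*} [CommRing Z] [IsDomain Z]
    (hres : ∀ p : Z, Prime p → Infinite (Z ⧸ Ideal.span {p}))
    (s : ℕ) (hs : 1 ≤ s) (P : Fin s → Polynomial Z) (hP0 : ∀ i, P i ≠ 0) :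
    (∃ p : Z, Prime p ∧ ∀ m : Z, p ∣ (∏ i, P i).eval m) ↔
    (∃ i, ∃ p : Z, Prime p ∧ Polynomial.C p ∣ P i) := by
  constructor
  · rintro ⟨p, hp, hdiv⟩
    haveI : Infinite (Z ⧸ Ideal.span {p}) := hres p hp
    have hspan : (Ideal.span {p}).IsPrime :=
      (Ideal.span_singleton_prime hp.ne_zero).mpr hp
    haveI : IsDomain (Z ⧸ Ideal.span {p}) := Ideal.Quotient.isDomain _
    set f := Ideal.Quotient.mk (Ideal.span {p}) with hf
    -- map to quotient is zero polynomial
    have hmapzero : ∀ Q : Polynomial Z, (∀ m : Z, p ∣ Q.eval m) → Q.map f = 0 := by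
      intro Q hQ
      apply Polynomial.zero_of_eval_zero
      intro x
      obtain ⟨m, rfl⟩ := Ideal.Quotient.mk_surjective x
      rw [Polynomial.eval_map, Polynomial.eval₂_at_apply, Ideal.Quotient.eq_zero_iff_mem,
        Ideal.mem_span_singleton]
      exact hQ m
    have hprod : (∏ i, P i).map f = 0 := hmapzero _ hdiv
    rw [Polynomial.map_prod] at hprod
    obtain ⟨i, _, hi⟩ := Finset.prod_eq_zero_iff.mp hprod
    refine ⟨i, p, hp, ?_⟩
    rw [Polynomial.C_dvd_iff_dvd_coeff]
    intro n
    have := Polynomial.ext_iff.mp hi n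
    rw [Polynomial.coeff_map, Polynomial.coeff_zero, Ideal.Quotient.eq_zero_iff_mem,
      Ideal.mem_span_singleton] at this
    exact this
  · rintro ⟨i, p, hp, hdvd⟩
    refine ⟨p, hp, fun m => ?_⟩
    have h1 : p ∣ (P i).eval m := by
      obtain ⟨Q, hQ⟩ := hdvd
      refine ⟨Q.eval m, ?_⟩
      rw [hQ]; simp
    calc p ∣ (P i).eval m := h1
      _ ∣ (∏ j, P j).eval m := by
          rw [Polynomial.eval_prod]
          exact Finset.dvd_prod_of_mem _ (Finset.mem_univ i)
end

section
/- Let Z be an integral domain in which every quotient Z/pZ by a prime principal ideal is infinite, and let P_1,...,P_s ∈ Z[y] be nonzero polynomials (s ≥ 2). Then the following are equivalent: (i) there exists a prime p of Z dividing all of P_1(m),...,P_s(m) for every m ∈ Z; (ii) the polynomials P_1,...,P_s have a common prime divisor p ∈ Z (dividing all their coefficients). -/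
open Polynomial

theorem stmt_7 {Z : Type*} [CommRing Z] [IsDomain Z]
    (hres : ∀ p : Z, Prime p → Infinite (Z ⧸ Ideal.span {p}))
    (s : ℕ) (hs : 2 ≤ s) (P : Fin s → Polynomial Z) (hP0 : ∀ i, P i ≠ 0) :
    (∃ p : Z, Prime p ∧ ∀ m : Z, ∀ i, p ∣ (P i).eval m) ↔
    (∃ p : Z, Prime p ∧ ∀ i, Polynomial.C p ∣ P i) := by
  constructor
  · rintro ⟨p, hp, hdvd⟩
    refine ⟨p, hp, fun i => ?_⟩
    have hprime : Ideal.IsPrime (Ideal.span {p}) :=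
      (Ideal.span_singleton_prime hp.ne_zero).mpr hp
    haveI := Ideal.Quotient.isDomain (Ideal.span {p} : Ideal Z)
    haveI := hres p hp
    set f := Ideal.Quotient.mk (Ideal.span {p} : Ideal Z)
    have hzero : (P i).map f = 0 := by
      apply Polynomial.zero_of_eval_zero
      intro x
      obtain ⟨m, rfl⟩ := Ideal.Quotient.mk_surjective x
      rw [Polynomial.eval_map, Polynomial.eval₂_at_apply]
      rw [← RingHom.map_zero f]
      apply Ideal.Quotient.eq.mpr
      simpa [Ideal.mem_span_singleton] using hdvd m i
    rw [Polynomial.C_dvd_iff_dvd_coeff]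
    intro n
    have := Polynomial.ext_iff.mp hzero n
    rw [Polynomial.coeff_map, Polynomial.coeff_zero] at this
    rw [← Ideal.mem_span_singleton]
    exact Ideal.Quotient.eq_zero_iff_mem.mp this
  · rintro ⟨p, hp, hdvd⟩
    refine ⟨p, hp, fun m i => ?_⟩
    obtain ⟨q, hq⟩ := hdvd i
    rw [hq, Polynomial.eval_mul, Polynomial.eval_C]
    exact Dvd.intro _ rfl
end

section
/- Let R be any integral domain and Z = R[u_1,...,u_r] with r ≥ 2. Then for every prime element p of Z, the quotient Z/pZ is infinite. -/
open MvPolynomial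

/-- Over a domain, the degree (in any variable) of a divisor is at most that of
a nonzero multiple. -/
lemma degreeOf_le_of_dvd_aux {R : Type*} [CommRing R] [IsDomain R] {n : ℕ}
    (i : Fin (n + 1)) {p q : MvPolynomial (Fin (n + 1)) R}
    (hdvd : p ∣ q) (hq : q ≠ 0) : degreeOf i p ≤ degreeOf i q := by
  classical
  set e : Fin (n + 1) ≃ Fin (n + 1) := Equiv.swap i 0 with he
  have hPdeg : degreeOf 0 (rename e p) = degreeOf i p := by
    have := degreeOf_rename_of_injective (p := p) (f := (e : Fin (n+1) → Fin (n+1)))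
      e.injective i
    simpa [he, Equiv.swap_apply_left] using this
  have hQdeg : degreeOf 0 (rename e q) = degreeOf i q := by
    have := degreeOf_rename_of_injective (p := q) (f := (e : Fin (n+1) → Fin (n+1)))
      e.injective i
    simpa [he, Equiv.swap_apply_left] using this
  rw [← hPdeg, ← hQdeg, ← natDegree_finSuccEquiv, ← natDegree_finSuccEquiv]
  apply Polynomial.natDegree_le_of_dvd
  · exact (map_dvd (finSuccEquiv R n).toRingHom
      (map_dvd (renameEquiv R e).toRingHom hdvd))
  · intro h
    apply hq
    have h1 : (renameEquiv R e) q = 0 := by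
      apply (finSuccEquiv R n).injective
      simpa using h
    simpa using (renameEquiv R e).injective (by simpa using h1)

theorem stmt_9 {R : Type*} [CommRing R] [IsDomain R]
    (r : ℕ) (hr : 2 ≤ r)
    (p : MvPolynomial (Fin r) R) (hp : Prime p) :
    Infinite (MvPolynomial (Fin r) R ⧸ Ideal.span {p}) := by
  classical
  obtain ⟨m, rfl⟩ : ∃ m, r = m + 2 := ⟨r - 2, by omega⟩
  -- choose a variable j such that p does not divide X j ^ b - X j ^ a for a < b
  have key : ∃ j : Fin (m + 2), ∀ a b : ℕ, a < b → ¬ p ∣ (X j ^ b - X j ^ a) := by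
    by_cases hconst : ∀ i : Fin (m + 2), degreeOf i p = 0
    · -- p is a constant
      have hpC : p = C (coeff 0 p) := by
        ext d
        rw [coeff_C]
        by_cases hd : d = 0
        · simp [hd]
        · rw [if_neg (fun h => hd h.symm)]
          by_contra hne
          obtain ⟨i, hi⟩ : ∃ i, d i ≠ 0 := by
            by_contra hall
            push_neg at hall
            exact hd (Finsupp.ext hall)
          have hmem : d ∈ p.support := by
            rwa [mem_support_iff]
          have : d i ≤ degreeOf i p := by
            rw [degreeOf_eq_sup]
            exact Finset.le_sup (f := fun m => m i) hmem
          rw [hconst i] at this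
          exact hi (Nat.le_zero.mp this)
      refine ⟨0, fun a b hab hdvd => ?_⟩
      rw [hpC] at hdvd
      rw [C_dvd_iff_dvd_coeff] at hdvd
      have h1 := hdvd (Finsupp.single 0 b)
      rw [coeff_sub, coeff_X_pow, coeff_X_pow, if_pos rfl,
        if_neg (by
          intro h
          have := DFunLike.congr_fun h (0 : Fin (m + 2))
          simp at this
          omega)] at h1
      simp only [sub_zero] at h1
      have : IsUnit (coeff 0 p) := isUnit_of_dvd_one h1
      exact hp.not_unit (hpC ▸ (this.map C))
    · push_neg at hconst
      obtain ⟨i, hi⟩ := hconst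
      refine ⟨if i = 0 then 1 else 0, fun a b hab hdvd => ?_⟩
      set j : Fin (m + 2) := if i = 0 then 1 else 0 with hj
      have hij : i ≠ j := by
        rcases eq_or_ne i 0 with h | h <;> simp [hj, h, Fin.ext_iff]
      have hne : (X j ^ b - X j ^ a : MvPolynomial (Fin (m + 2)) R) ≠ 0 := by
        intro h
        have := congrArg (coeff (Finsupp.single j b)) h
        rw [coeff_sub, coeff_X_pow, coeff_X_pow, if_pos rfl,
          if_neg (by
            intro hcon
            have := DFunLike.congr_fun hcon j
            simp at this
            omega)] at this
        simp at this
      have hdeg := degreeOf_le_of_dvd_aux (n := m + 1) i hdvd hne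
      have hXj : degreeOf i (X j ^ b - X j ^ a : MvPolynomial (Fin (m + 2)) R) = 0 := by
        have h1 : degreeOf i (X j ^ b : MvPolynomial (Fin (m + 2)) R) = 0 := by
          have := degreeOf_pow_le i (X j : MvPolynomial (Fin (m + 2)) R) b
          rw [degreeOf_X, if_neg hij] at this
          omega
        have h2 : degreeOf i (X j ^ a : MvPolynomial (Fin (m + 2)) R) = 0 := by
          have := degreeOf_pow_le i (X j : MvPolynomial (Fin (m + 2)) R) a
          rw [degreeOf_X, if_neg hij] at this
          omega
        have := degreeOf_sub_le i (X j ^ b) (X j ^ a : MvPolynomial (Fin (m + 2)) R)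
        omega
      rw [hXj] at hdeg
      exact hi (Nat.le_zero.mp hdeg)
  obtain ⟨j, hkey⟩ := key
  apply Infinite.of_injective (fun n : ℕ => (Ideal.Quotient.mk (Ideal.span {p})) (X j ^ n))
  intro a b hab
  by_contra hne
  rcases Nat.lt_or_ge a b with h | h
  · apply hkey a b h
    rw [← Ideal.mem_span_singleton]
    rw [Ideal.Quotient.eq] at hab
    simpa using (Ideal.span {p}).neg_mem hab
  · have h' : b < a := lt_of_le_of_ne h (fun he => hne he.symm)
    apply hkey b a h'
    rw [← Ideal.mem_span_singleton]
    rw [Ideal.Quotient.eq] at hab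
    simpa using hab
end

section
/- Let R be an integral domain, p a prime element of R, and P ∈ R[u_1,...,u_r][y] a polynomial not divisible by p. Let m(u) ∈ R[u_1,...,u_r] be a polynomial containing two monomials m_1, m_2 with coefficients μ_1, μ_2 ∈ R such that μ_2 ≡ 1 (mod μ_1) and min(deg m_1, deg m_2) > deg_u(P). Then the polynomial P(u, m(u)) ∈ R[u_1,...,u_r] is not divisible by p. -/
/-! Reducing modulo `p` turns `P` into a nonzero polynomial over the domain `(R ⧸ p)[u]`, and
`m` into a polynomial of total degree `> deg_u P`: if `p ∣ μ₁` then `μ₂ ≡ 1 (mod p)`, so one of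
the two monomials survives. Over a domain, substituting into a nonzero `Q` a polynomial `m` with
`deg m > deg_u Q` gives a nonzero result, because the term `lc(Q) m^n` (`n = deg_y Q`) has total
degree at least `n deg m`, while each other term `Q_i m^i` has total degree
`≤ deg_u Q + i deg m < (i + 1) deg m`. -/

open Polynomial

/-- The total degree in the `u`-variables of a polynomial
`P ∈ R[u_1,...,u_r][y]`: the max over the `y`-coefficients of their total degree. -/
noncomputable def degU {R : Type*} [CommRing R] {r : ℕ}
    (P : Polynomial (MvPolynomial (Fin r) R)) : ℕ :=
  P.support.sup fun i => (P.coeff i).totalDegree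

section degU

variable {R : Type*} [CommRing R] {r : ℕ}

theorem degU_le_iff {Q : Polynomial (MvPolynomial (Fin r) R)} {n : ℕ} :
    degU Q ≤ n ↔ ∀ i, (Q.coeff i).totalDegree ≤ n := by
  refine Finset.sup_le_iff.trans ⟨fun h i => ?_, fun h i _ => h i⟩
  by_cases hi : i ∈ Q.support
  · exact h i hi
  · simp [Polynomial.notMem_support_iff.mp hi]

theorem totalDegree_coeff_le_degU (Q : Polynomial (MvPolynomial (Fin r) R)) (i : ℕ) :
    (Q.coeff i).totalDegree ≤ degU Q :=
  degU_le_iff.mp le_rfl i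

theorem degU_eraseLead_le (Q : Polynomial (MvPolynomial (Fin r) R)) :
    degU Q.eraseLead ≤ degU Q :=
  degU_le_iff.mpr fun i => by
    rw [eraseLead_coeff]
    split_ifs
    · simp
    · exact totalDegree_coeff_le_degU Q i

theorem degU_map_le {S : Type*} [CommRing S] (f : R →+* S)
    (Q : Polynomial (MvPolynomial (Fin r) R)) :
    degU (Q.map (MvPolynomial.map f)) ≤ degU Q :=
  degU_le_iff.mpr fun i => by
    rw [coeff_map]
    exact (Finset.sup_mono (MvPolynomial.support_map_subset f _)).trans
      (totalDegree_coeff_le_degU Q i)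

theorem totalDegree_eval_le (Q : Polynomial (MvPolynomial (Fin r) R))
    (m : MvPolynomial (Fin r) R) :
    (Q.eval m).totalDegree ≤ degU Q + Q.natDegree * m.totalDegree := by
  rw [eval_eq_sum, Polynomial.sum]
  refine MvPolynomial.totalDegree_finsetSum_le fun i hi => ?_
  calc (Q.coeff i * m ^ i).totalDegree
      ≤ (Q.coeff i).totalDegree + (m ^ i).totalDegree := MvPolynomial.totalDegree_mul _ _
    _ ≤ degU Q + Q.natDegree * m.totalDegree :=
        add_le_add (totalDegree_coeff_le_degU Q i) ((MvPolynomial.totalDegree_pow _ _).trans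
          (Nat.mul_le_mul_right _ (le_natDegree_of_mem_supp i hi)))

theorem totalDegree_pow_of_isDomain [IsDomain R] (m : MvPolynomial (Fin r) R) (n : ℕ) :
    (m ^ n).totalDegree = n * m.totalDegree := by
  rcases eq_or_ne m 0 with rfl | hm
  · cases n <;> simp
  induction n with
  | zero => simp
  | succ k ih =>
    rw [pow_succ, MvPolynomial.totalDegree_mul_of_isDomain (pow_ne_zero _ hm) hm, ih]
    ring

theorem eval_ne_zero_of_degU_lt_totalDegree [IsDomain R]
    {Q : Polynomial (MvPolynomial (Fin r) R)} (hQ : Q ≠ 0)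
    {m : MvPolynomial (Fin r) R} (hm : degU Q < m.totalDegree) :
    Q.eval m ≠ 0 := by
  by_cases hn : Q.natDegree = 0
  · obtain ⟨c, rfl⟩ := natDegree_eq_zero.mp hn
    simpa using hQ
  have hsplit : Q.eval m = Q.eraseLead.eval m + Q.leadingCoeff * m ^ Q.natDegree := by
    conv_lhs => rw [← Q.eraseLead_add_C_mul_X_pow]
    simp only [eval_add, eval_mul, eval_C, eval_pow, eval_X]
  have hm0 : m ≠ 0 := by
    rintro rfl
    simp at hm
  have hlow : (Q.eraseLead.eval m).totalDegree < (Q.leadingCoeff * m ^ Q.natDegree).totalDegree :=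
    calc (Q.eraseLead.eval m).totalDegree
        ≤ degU Q + Q.eraseLead.natDegree * m.totalDegree :=
          (totalDegree_eval_le _ _).trans (add_le_add_left (degU_eraseLead_le Q) _)
      _ < (Q.eraseLead.natDegree + 1) * m.totalDegree := by rw [add_one_mul]; omega
      _ ≤ Q.natDegree * m.totalDegree := by
          gcongr
          have := Q.eraseLead_natDegree_le
          omega
      _ ≤ (Q.leadingCoeff * m ^ Q.natDegree).totalDegree := by
          rw [MvPolynomial.totalDegree_mul_of_isDomain (leadingCoeff_ne_zero.mpr hQ)
            (pow_ne_zero _ hm0), totalDegree_pow_of_isDomain]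
          omega
  intro h
  rw [hsplit] at h
  have := congrArg MvPolynomial.totalDegree (eq_neg_of_add_eq_zero_right h)
  rw [MvPolynomial.totalDegree_neg] at this
  omega

end degU

theorem map_ne_zero_or_map_ne_zero_of_dvd_sub_one {R S : Type*} [CommRing R] [Ring S]
    [Nontrivial S] (q : R →+* S) {a b : R} (h : a ∣ b - 1) : q a ≠ 0 ∨ q b ≠ 0 := by
  by_contra! hab
  obtain ⟨c, hc⟩ := h
  have := congrArg q hc
  simp [hab] at this

theorem Polynomial.C_dvd_iff_map_hom_eq_zero {R S : Type*} [CommRing R] [CommRing S]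
    (q : R →+* S) (a : R) (hq : ∀ b, q b = 0 ↔ a ∣ b) (P : R[X]) :
    C a ∣ P ↔ P.map q = 0 := by
  simp only [C_dvd_iff_dvd_coeff, Polynomial.ext_iff, coeff_map, coeff_zero, hq]

theorem MvPolynomial.le_totalDegree_map {σ R S : Type*} [CommSemiring R] [CommSemiring S]
    (q : R →+* S) {m : MvPolynomial σ R} {d : σ →₀ ℕ} (hd : q (m.coeff d) ≠ 0) :
    (d.sum fun _ n => n) ≤ (map q m).totalDegree :=
  le_totalDegree (mem_support_iff.mpr (by rwa [coeff_map]))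

theorem stmt_12_general {R : Type*} [CommRing R] [IsDomain R]
    (r : ℕ) (p : R) (hp : Prime p)
    (P : Polynomial (MvPolynomial (Fin r) R))
    (hP : ¬ Polynomial.C (MvPolynomial.C p) ∣ P)
    (m : MvPolynomial (Fin r) R)
    (d₁ d₂ : Fin r →₀ ℕ)
    (μ₁ μ₂ : R)
    (hμ₁ : MvPolynomial.coeff d₁ m = μ₁) (hμ₂ : MvPolynomial.coeff d₂ m = μ₂)
    (hcong : μ₁ ∣ (μ₂ - 1))
    (hdeg₁ : degU P < d₁.sum fun _ n => n)
    (hdeg₂ : degU P < d₂.sum fun _ n => n) :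
    ¬ MvPolynomial.C p ∣ P.eval m := by
  have := (Ideal.span_singleton_prime hp.ne_zero).mpr hp
  set q := Ideal.Quotient.mk (Ideal.span {p})
  set φ := MvPolynomial.map (σ := Fin r) q
  have hφ (f : MvPolynomial (Fin r) R) : φ f = 0 ↔ MvPolynomial.C p ∣ f :=
    (MvPolynomial.C_dvd_iff_map_hom_eq_zero q p (Ideal.Quotient.eq_zero_iff_dvd p) f).symm
  have hPφ : P.map φ ≠ 0 := fun h => hP ((C_dvd_iff_map_hom_eq_zero φ _ hφ P).mpr h)
  have hmφ : degU (P.map φ) < (φ m).totalDegree := by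
    refine (degU_map_le q P).trans_lt ?_
    rcases map_ne_zero_or_map_ne_zero_of_dvd_sub_one q hcong with h | h
    · exact hdeg₁.trans_le (MvPolynomial.le_totalDegree_map q (hμ₁ ▸ h))
    · exact hdeg₂.trans_le (MvPolynomial.le_totalDegree_map q (hμ₂ ▸ h))
  intro hdvd
  apply eval_ne_zero_of_degU_lt_totalDegree hPφ hmφ
  rw [eval_map, eval₂_hom]
  exact (hφ _).mpr hdvd

theorem stmt_12 {R : Type*} [CommRing R] [IsDomain R]
    (r : ℕ) (p : R) (hp : Prime p)
    (P : Polynomial (MvPolynomial (Fin r) R))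
    (hP : ¬ Polynomial.C (MvPolynomial.C p) ∣ P)
    (m : MvPolynomial (Fin r) R)
    (d₁ d₂ : Fin r →₀ ℕ) (hd : d₁ ≠ d₂)
    (μ₁ μ₂ : R)
    (hμ₁ : MvPolynomial.coeff d₁ m = μ₁) (hμ₂ : MvPolynomial.coeff d₂ m = μ₂)
    (hμ₁0 : μ₁ ≠ 0) (hμ₂0 : μ₂ ≠ 0)
    (hcong : μ₁ ∣ (μ₂ - 1))
    (hdeg₁ : degU P < d₁.sum fun _ n => n)
    (hdeg₂ : degU P < d₂.sum fun _ n => n) :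
    ¬ MvPolynomial.C p ∣ P.eval m :=
  stmt_12_general r p hp P hP m d₁ d₂ μ₁ μ₂ hμ₁ hμ₂ hcong hdeg₁ hdeg₂
end

section
/- (Mod N Schinzel) Let P_1,...,P_s ∈ ℤ[y] (s ≥ 1) be polynomials such that no prime number p divides ∏_{i=1}^s P_i(m) for all m ∈ ℤ. Then for every N ≥ 1 there exist infinitely many m ∈ ℤ such that for each i, P_i(m) is congruent modulo N to some prime number not dividing N. -/
/-!
Since a prime `p` divides `F(m)` only according to the residue of `m` mod `p`, the Chinese
remainder theorem glues, for the finitely many primes dividing `N`, values of `m` at which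
`F = ∏ Pᵢ` is prime to each of them into one `m₀` with `F(m₀)` prime to `N`. Each `Pᵢ(m₀)` is
then a unit mod `N`, so by Dirichlet's theorem it is congruent mod `N` to a prime, and the
whole residue class of `m₀` mod `N` satisfies the conclusion.
-/

open Polynomial

theorem Int.ModEq.isCoprime_iff {a b n : ℤ} (h : a ≡ b [ZMOD n]) :
    IsCoprime a n ↔ IsCoprime b n := by
  obtain ⟨k, hk⟩ := h.dvd
  rw [show b = a + n * k by linarith, IsCoprime.add_mul_left_left_iff]

theorem Int.ModEq.polynomial_eval (F : ℤ[X]) {a b n : ℤ} (h : a ≡ b [ZMOD n]) :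
    F.eval a ≡ F.eval b [ZMOD n] :=
  Int.modEq_iff_dvd.mpr (h.dvd.trans (sub_dvd_eval_sub b a F))

theorem IsCoprime.exists_intModEq_and_intModEq {x y : ℤ} (h : IsCoprime x y) (a b : ℤ) :
    ∃ m, m ≡ a [ZMOD x] ∧ m ≡ b [ZMOD y] := by
  obtain ⟨u, v, huv⟩ := h
  refine ⟨a * (v * y) + b * (u * x), Int.modEq_iff_dvd.mpr ⟨(a - b) * u, ?_⟩,
    Int.modEq_iff_dvd.mpr ⟨(b - a) * v, ?_⟩⟩
  · linear_combination -a * huv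
  · linear_combination -b * huv

theorem Polynomial.exists_isCoprime_eval {F : ℤ[X]}
    (hF : ∀ p : ℤ, Prime p → ∃ m, ¬ p ∣ F.eval m) {N : ℤ} (hN : N ≠ 0) :
    ∃ m, IsCoprime (F.eval m) N := by
  induction N using UniqueFactorizationMonoid.induction_on_coprime with
  | h0 => exact absurd rfl hN
  | h1 hu => exact ⟨0, isCoprime_one_right.of_isCoprime_of_dvd_right hu.dvd⟩
  | hpr i hp =>
    obtain ⟨m, hm⟩ := hF _ hp
    exact ⟨m, ((hp.coprime_iff_not_dvd).mpr hm).symm.pow_right⟩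
  | hcp hxy ihx ihy =>
    obtain ⟨mx, hmx⟩ := ihx (left_ne_zero_of_mul hN)
    obtain ⟨my, hmy⟩ := ihy (right_ne_zero_of_mul hN)
    obtain ⟨m, hx, hy⟩ := hxy.isCoprime.exists_intModEq_and_intModEq mx my
    exact ⟨m, ((hx.polynomial_eval F).isCoprime_iff.mpr hmx).mul_right
      ((hy.polynomial_eval F).isCoprime_iff.mpr hmy)⟩

theorem Int.exists_prime_not_dvd_and_modEq_of_isCoprime {a N : ℤ} (hN : 0 < N)
    (h : IsCoprime a N) : ∃ q : ℕ, q.Prime ∧ ¬ (q : ℤ) ∣ N ∧ a ≡ q [ZMOD N] := by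
  lift N to ℕ using hN.le
  obtain ⟨q, -, hq, hqa⟩ := Nat.forall_exists_prime_gt_and_zmodEq 0 (by omega) h
  refine ⟨q, hq, fun hqN => ?_, hqa.symm⟩
  exact (Nat.prime_iff_prime_int.mp hq).not_isUnit
    ((hqa.isCoprime_iff.mpr h).isUnit_of_dvd' dvd_rfl hqN)

theorem Int.infinite_setOf_modEq {N : ℤ} (hN : N ≠ 0) (m₀ : ℤ) :
    {m : ℤ | m ≡ m₀ [ZMOD N]}.Infinite :=
  Set.infinite_of_injective_forall_mem (f := fun k : ℤ => m₀ + N * k)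
    (fun _ _ h => mul_left_cancel₀ hN (add_left_cancel h))
    (fun k => (Int.modEq_iff_dvd.mpr ⟨-k, by ring⟩))

theorem stmt_14_general (s : ℕ) (P : Fin s → Polynomial ℤ)
    (hAV1 : ∀ p : ℤ, Prime p → ∃ m : ℤ, ¬ p ∣ (∏ i, P i).eval m) :
    ∀ N : ℤ, 1 ≤ N →
      {m : ℤ | ∀ i, ∃ q : ℕ, q.Prime ∧ ¬ (q : ℤ) ∣ N ∧
        (P i).eval m ≡ (q : ℤ) [ZMOD N]}.Infinite := by
  intro N hN
  obtain ⟨m₀, hm₀⟩ := exists_isCoprime_eval hAV1 (N := N) (by omega)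
  rw [eval_prod, IsCoprime.prod_left_iff] at hm₀
  choose q hq hqN hPq using fun i =>
    Int.exists_prime_not_dvd_and_modEq_of_isCoprime (by omega) (hm₀ i (Finset.mem_univ i))
  refine (Int.infinite_setOf_modEq (N := N) (by omega) m₀).mono fun m hm i => ?_
  exact ⟨q i, hq i, hqN i, (hm.polynomial_eval (P i)).trans (hPq i)⟩

theorem stmt_14 (s : ℕ) (hs : 1 ≤ s) (P : Fin s → Polynomial ℤ)
    (hAV1 : ∀ p : ℤ, Prime p → ∃ m : ℤ, ¬ p ∣ (∏ i, P i).eval m) :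
    ∀ N : ℤ, 1 ≤ N →
      {m : ℤ | ∀ i, ∃ q : ℕ, q.Prime ∧ ¬ (q : ℤ) ∣ N ∧
        (P i).eval m ≡ (q : ℤ) [ZMOD N]}.Infinite :=
  stmt_14_general s P hAV1
end

section
/- Let P_1, P_2 ∈ ℤ[y] be nonzero polynomials with no common divisor in ℚ[y], satisfying: no prime p divides both P_1(m) and P_2(m) for all m ∈ ℤ. Then there exist infinitely many m ∈ ℤ such that gcd(P_1(m), P_2(m)) = 1. -/
/-!
Clearing denominators in a Bézout identity over `ℚ` gives `A P₁ + B P₂ = δ` with `A, B ∈ ℤ[y]`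
and an integer `δ ≠ 0`, so every prime dividing both `P₁(m)` and `P₂(m)` divides `δ`.
Whether a prime `p` divides `P(m)` depends only on `m mod p`, so by the Chinese remainder
theorem one `m` avoids every prime factor of `δ` at once, and then so does every `m + δ k`.
-/

open Polynomial

theorem exists_mul_add_mul_eq_C_of_isCoprime_map {R K : Type*} [CommRing R] [IsDomain R]
    [Field K] [Algebra R K] [IsFractionRing R K] {P Q : R[X]}
    (h : IsCoprime (P.map (algebraMap R K)) (Q.map (algebraMap R K))) :
    ∃ δ : R, δ ≠ 0 ∧ ∃ A B : R[X], A * P + B * Q = C δ := by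
  obtain ⟨a, b, hab⟩ := h
  obtain ⟨c, hc, hA⟩ := IsLocalization.integerNormalization_spec (nonZeroDivisors R) a
  obtain ⟨d, hd, hB⟩ := IsLocalization.integerNormalization_spec (nonZeroDivisors R) b
  refine ⟨c * d, mul_ne_zero (nonZeroDivisors.ne_zero hc) (nonZeroDivisors.ne_zero hd),
    C d * IsLocalization.integerNormalization (nonZeroDivisors R) a,
    C c * IsLocalization.integerNormalization (nonZeroDivisors R) b, ?_⟩
  apply map_injective _ (IsFractionRing.injective R K)
  simp only [Polynomial.map_add, Polynomial.map_mul, map_C, hA, hB, map_mul, Algebra.smul_def,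
    Polynomial.algebraMap_apply]
  linear_combination C (algebraMap R K c) * C (algebraMap R K d) * hab

theorem dvd_eval_iff_of_dvd_sub {R : Type*} [CommRing R] (P : R[X]) {q a b : R}
    (h : q ∣ a - b) : q ∣ P.eval a ↔ q ∣ P.eval b :=
  dvd_iff_dvd_of_dvd_sub (h.trans (sub_dvd_eval_sub a b P))

theorem Int.exists_forall_dvd_sub_of_primes (s : Finset ℕ) (hs : ∀ p ∈ s, p.Prime)
    (f : ℕ → ℤ) : ∃ m : ℤ, ∀ p ∈ s, (p : ℤ) ∣ m - f p := by
  have hcop : Pairwise (Function.onFun IsCoprime fun p : s => Ideal.span {((p : ℕ) : ℤ)}) := by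
    intro p q hpq
    rw [Function.onFun, Ideal.isCoprime_span_singleton_iff]
    exact Nat.Coprime.isCoprime <| (Nat.coprime_primes (hs p p.2) (hs q q.2)).mpr
      (Subtype.coe_injective.ne hpq)
  obtain ⟨m, hm⟩ := Ideal.exists_forall_sub_mem_ideal hcop (fun p => f p)
  exact ⟨m, fun p hp => Ideal.mem_span_singleton.mp (hm ⟨p, hp⟩)⟩

theorem Int.gcd_eval_add_mul_eq_one {P Q A B : ℤ[X]} {δ : ℤ} (hAB : A * P + B * Q = C δ)
    {m : ℤ} (hm : ∀ p : ℕ, p.Prime → (p : ℤ) ∣ δ → ¬((p : ℤ) ∣ P.eval m ∧ (p : ℤ) ∣ Q.eval m))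
    (k : ℤ) : Int.gcd (P.eval (m + δ * k)) (Q.eval (m + δ * k)) = 1 := by
  by_contra hne
  obtain ⟨p, hp, hpg⟩ := Nat.exists_prime_and_dvd hne
  have hpP : (p : ℤ) ∣ P.eval (m + δ * k) :=
    (Int.natCast_dvd_natCast.mpr hpg).trans (Int.gcd_dvd_left _ _)
  have hpQ : (p : ℤ) ∣ Q.eval (m + δ * k) :=
    (Int.natCast_dvd_natCast.mpr hpg).trans (Int.gcd_dvd_right _ _)
  have hpδ : (p : ℤ) ∣ δ := by
    have hval := congrArg (eval (m + δ * k)) hAB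
    rw [eval_add, eval_mul, eval_mul, eval_C] at hval
    exact hval ▸ dvd_add (hpP.mul_left _) (hpQ.mul_left _)
  have hshift : (p : ℤ) ∣ m + δ * k - m := by simpa using hpδ.mul_right k
  exact hm p hp hpδ
    ⟨(dvd_eval_iff_of_dvd_sub P hshift).mp hpP, (dvd_eval_iff_of_dvd_sub Q hshift).mp hpQ⟩

theorem stmt_15_general (P₁ P₂ : Polynomial ℤ)
    (hcop : ∀ d : Polynomial ℚ,
      d ∣ P₁.map (algebraMap ℤ ℚ) → d ∣ P₂.map (algebraMap ℤ ℚ) → IsUnit d)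
    (hAV2 : ∀ p : ℤ, Prime p → ∃ m : ℤ, ¬ p ∣ P₁.eval m ∨ ¬ p ∣ P₂.eval m) :
    {m : ℤ | Int.gcd (P₁.eval m) (P₂.eval m) = 1}.Infinite := by
  have hcopℚ : IsCoprime (P₁.map (algebraMap ℤ ℚ)) (P₂.map (algebraMap ℤ ℚ)) := by
    rw [← EuclideanDomain.gcd_isUnit_iff]
    exact hcop _ (EuclideanDomain.gcd_dvd_left _ _) (EuclideanDomain.gcd_dvd_right _ _)
  obtain ⟨δ, hδ, A, B, hAB⟩ := exists_mul_add_mul_eq_C_of_isCoprime_map hcopℚ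
  choose! witness hwitness using
    fun (p : ℕ) (hp : p.Prime) => hAV2 p (Nat.prime_iff_prime_int.mp hp)
  obtain ⟨m, hm⟩ := Int.exists_forall_dvd_sub_of_primes δ.natAbs.primeFactors
    (fun p hp => Nat.prime_of_mem_primeFactors hp) witness
  have hgood : ∀ p : ℕ, p.Prime → (p : ℤ) ∣ δ →
      ¬((p : ℤ) ∣ P₁.eval m ∧ (p : ℤ) ∣ P₂.eval m) := by
    intro p hp hpδ
    have hmp := hm p (Nat.mem_primeFactors.mpr ⟨hp, Int.natCast_dvd.mp hpδ, by simpa using hδ⟩)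
    rw [dvd_eval_iff_of_dvd_sub P₁ hmp, dvd_eval_iff_of_dvd_sub P₂ hmp, not_and_or]
    exact hwitness p hp
  refine Set.infinite_of_injective_forall_mem (f := fun k : ℤ => m + δ * k) ?_
    (Int.gcd_eval_add_mul_eq_one hAB hgood)
  intro x y hxy
  simpa [hδ] using hxy

theorem stmt_15 (P₁ P₂ : Polynomial ℤ) (h1 : P₁ ≠ 0) (h2 : P₂ ≠ 0)
    (hcop : ∀ d : Polynomial ℚ,
      d ∣ P₁.map (algebraMap ℤ ℚ) → d ∣ P₂.map (algebraMap ℤ ℚ) → IsUnit d)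
    (hAV2 : ∀ p : ℤ, Prime p → ∃ m : ℤ, ¬ p ∣ P₁.eval m ∨ ¬ p ∣ P₂.eval m) :
    {m : ℤ | Int.gcd (P₁.eval m) (P₂.eval m) = 1}.Infinite :=
  stmt_15_general P₁ P₂ hcop hAV2
end

section
/- Let Z be a PID with fraction field Q, P_1,...,P_s ∈ Z[y] nonzero with no common divisor in Q[y], and for m ∈ Z set d_m = gcd(P_1(m),...,P_s(m)). Then the set D* = {d_m : m ∈ Z} is stable under gcd: for all m, m' ∈ Z there exists m'' ∈ Z such that d_{m''} is an associate of gcd(d_m, d_{m'}). -/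
/-!
Clearing denominators in a Bézout relation over `Q[y]` gives `c ≠ 0` in the ideal
`(P_1, …, P_s) ∩ Z`, so every ideal `I_t = (P_1(t), …, P_s(t))` contains `c`, and `I_t + (w)`
only depends on `t` modulo `w`. Write `I_m = (g a)`, `I_{m'} = (g b)` with `a, b` coprime and
split `c = u v` with `u` coprime to `a` and `v` dividing a power of `a`. For `M ≡ m mod u` and
`M ≡ m' mod v`,
`I_M = (I_m + (u)) ∩ (I_{m'} + (v)) = ((g) + (u)) ∩ ((g) + (v)) = (g) = I_m + I_{m'}`.
-/

open Polynomial

theorem Ideal.sup_inf_sup_eq_sup_mul {R : Type*} [CommRing R] {I U V : Ideal R}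
    (hUV : U ⊔ V = ⊤) : (I ⊔ U) ⊓ (I ⊔ V) = I ⊔ U * V := by
  have hcop : IsCoprime (I ⊔ U) (I ⊔ V) :=
    Ideal.isCoprime_iff_sup_eq.mpr (eq_top_iff.mpr (hUV ▸ sup_le_sup le_sup_right le_sup_right))
  refine le_antisymm ?_ (sup_le (le_inf le_sup_left le_sup_left)
    (Ideal.mul_le_inf.trans (inf_le_inf le_sup_right le_sup_right)))
  rw [← Ideal.mul_eq_inf_of_isCoprime hcop, Ideal.sup_mul, Ideal.mul_sup, Ideal.mul_sup]
  exact sup_le (sup_le (le_sup_of_le_left Ideal.mul_le_left) (le_sup_of_le_left Ideal.mul_le_left))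
    (sup_le (le_sup_of_le_left Ideal.mul_le_right) le_sup_right)

theorem exists_eq_mul_eq_mul_isCoprime_of_sup_eq {R : Type*} [CommRing R] [IsDomain R]
    {x y g : R} (hg : g ≠ 0) (h : Ideal.span {x} ⊔ Ideal.span {y} = Ideal.span {g}) :
    ∃ a b, x = g * a ∧ y = g * b ∧ IsCoprime a b := by
  obtain ⟨a, rfl⟩ : g ∣ x :=
    Ideal.mem_span_singleton.mp (h ▸ Ideal.mem_sup_left (Ideal.mem_span_singleton_self x))
  obtain ⟨b, rfl⟩ : g ∣ y :=
    Ideal.mem_span_singleton.mp (h ▸ Ideal.mem_sup_right (Ideal.mem_span_singleton_self y))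
  obtain ⟨r, s, hrs⟩ := Ideal.mem_span_pair.mp (show g ∈ Ideal.span {g * a, g * b} by
    rw [Ideal.span_insert, h]; exact Ideal.mem_span_singleton_self g)
  refine ⟨a, b, rfl, rfl, r, s, mul_left_cancel₀ hg ?_⟩
  linear_combination hrs

theorem IsCoprime.exists_dvd_sub_dvd_sub {R : Type*} [CommRing R] {u v : R}
    (huv : IsCoprime u v) (m m' : R) : ∃ M, u ∣ M - m ∧ v ∣ M - m' := by
  obtain ⟨p, q, hpq⟩ := huv
  exact ⟨m * (q * v) + m' * (p * u), ⟨(m' - m) * p, by linear_combination m * hpq⟩,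
    ⟨(m - m') * q, by linear_combination m' * hpq⟩⟩

theorem exists_mul_eq_isCoprime_dvd_pow {R : Type*} [CommRing R] [IsDomain R]
    [IsPrincipalIdealRing R] (a : R) {c : R} (hc : c ≠ 0) :
    ∃ u v, u * v = c ∧ IsCoprime a u ∧ ∃ n, v ∣ a ^ n := by
  induction c using UniqueFactorizationMonoid.induction_on_prime with
  | h₁ => exact absurd rfl hc
  | h₂ c hunit =>
    exact ⟨c, 1, mul_one c, isCoprime_one_right.of_isCoprime_of_dvd_right hunit.dvd, 0, by simp⟩
  | h₃ c p hc0 hp ih =>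
    obtain ⟨u, v, rfl, hau, n, hv⟩ := ih hc0
    by_cases hpa : p ∣ a
    · exact ⟨u, p * v, by ring, hau, n + 1, pow_succ' a n ▸ mul_dvd_mul hpa hv⟩
    · exact ⟨p * u, v, by ring, ((hp.coprime_iff_not_dvd.mpr hpa).symm).mul_right hau, n, hv⟩

theorem exists_eq_sup_of_congr_mod {R : Type*} [CommRing R] [IsDomain R]
    [IsPrincipalIdealRing R] (F : R → Ideal R) {c : R} (hc : c ≠ 0) (hcF : ∀ t, c ∈ F t)
    (hF : ∀ t t' w, w ∣ t - t' → F t ⊔ Ideal.span {w} = F t' ⊔ Ideal.span {w})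
    (m m' : R) :
    ∃ M, F M = F m ⊔ F m' := by
  obtain ⟨x, hx⟩ := (IsPrincipalIdealRing.principal (F m)).principal
  obtain ⟨y, hy⟩ := (IsPrincipalIdealRing.principal (F m')).principal
  obtain ⟨g, hg⟩ := (IsPrincipalIdealRing.principal (F m ⊔ F m')).principal
  rw [Ideal.submodule_span_eq] at hx hy hg
  have hg0 : g ≠ 0 := by
    rintro rfl
    have hc' : c ∈ F m ⊔ F m' := Ideal.mem_sup_left (hcF m)
    rw [hg, Ideal.mem_span_singleton, zero_dvd_iff] at hc'
    exact hc hc'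
  obtain ⟨a, b, rfl, rfl, hab⟩ :=
    exists_eq_mul_eq_mul_isCoprime_of_sup_eq (x := x) (y := y) hg0 (by rw [← hx, ← hy, hg])
  obtain ⟨u, v, huv, hau, n, hva⟩ := exists_mul_eq_isCoprime_dvd_pow a hc
  have hbv : IsCoprime b v := (hab.pow_left (m := n)).symm.of_isCoprime_of_dvd_right hva
  have huv' : IsCoprime u v := (hau.pow_left (m := n)).symm.of_isCoprime_of_dvd_right hva
  have hsplit :
      ∀ I : Ideal R, c ∈ I → (I ⊔ Ideal.span {u}) ⊓ (I ⊔ Ideal.span {v}) = I := by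
    intro I hcI
    rw [Ideal.sup_inf_sup_eq_sup_mul ((Ideal.isCoprime_span_singleton_iff u v).mpr huv').sup_eq,
      Ideal.span_singleton_mul_span_singleton, huv, sup_eq_left, Ideal.span_singleton_le_iff_mem]
    exact hcI
  have habsorb : ∀ {z w : R}, IsCoprime z w →
      Ideal.span {g * z} ⊔ Ideal.span {w} = Ideal.span {g} ⊔ Ideal.span {w} := by
    intro z w hzw
    rw [sup_comm, ← Ideal.span_singleton_mul_span_singleton, Ideal.sup_mul_eq_of_coprime_right
      ((Ideal.isCoprime_span_singleton_iff w z).mpr hzw.symm).sup_eq, sup_comm]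
  obtain ⟨M, hMu, hMv⟩ := IsCoprime.exists_dvd_sub_dvd_sub huv' m m'
  refine ⟨M, ?_⟩
  calc F M = (F M ⊔ Ideal.span {u}) ⊓ (F M ⊔ Ideal.span {v}) := (hsplit _ (hcF M)).symm
    _ = (F m ⊔ Ideal.span {u}) ⊓ (F m' ⊔ Ideal.span {v}) := by
      rw [hF M m u hMu, hF M m' v hMv]
    _ = (Ideal.span {g} ⊔ Ideal.span {u}) ⊓ (Ideal.span {g} ⊔ Ideal.span {v}) := by
      rw [hx, hy, habsorb hau, habsorb hbv]
    _ = F m ⊔ F m' := by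
      rw [hg]; exact hsplit _ (hg ▸ Ideal.mem_sup_left (hcF m))

attribute [local instance] Polynomial.algebra Polynomial.isLocalization in
theorem exists_C_mem_of_map_eq_top {R K : Type*} [CommRing R] [IsDomain R] [Field K]
    [Algebra R K] [IsFractionRing R K] {I : Ideal R[X]}
    (hI : I.map (mapRingHom (algebraMap R K)) = ⊤) : ∃ c : R, c ≠ 0 ∧ C c ∈ I := by
  obtain ⟨⟨⟨f, hf⟩, ⟨_, c, hc, rfl⟩⟩, h⟩ :=
    (IsLocalization.mem_map_algebraMap_iff ((nonZeroDivisors R).map C) K[X]).mp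
      (hI ▸ Submodule.mem_top : (1 : K[X]) ∈ I.map (algebraMap R[X] K[X]))
  refine ⟨c, nonZeroDivisors.ne_zero hc, ?_⟩
  have hfc : f = C c := by
    apply Polynomial.map_injective _ (IsFractionRing.injective R K)
    simpa [Polynomial.algebraMap_def] using h.symm
  exact hfc ▸ hf

theorem Ideal.span_range_eq_top_of_forall_dvd_isUnit {R ι : Type*} [CommRing R]
    [IsPrincipalIdealRing R] (f : ι → R) (h : ∀ d, (∀ i, d ∣ f i) → IsUnit d) :
    Ideal.span (Set.range f) = ⊤ := by
  obtain ⟨g, hg⟩ := (IsPrincipalIdealRing.principal (Ideal.span (Set.range f))).principal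
  rw [hg, Ideal.submodule_span_eq, Ideal.span_singleton_eq_top]
  refine h g fun i => Ideal.mem_span_singleton.mp ?_
  rw [← Ideal.submodule_span_eq, ← hg]
  exact Ideal.subset_span ⟨i, rfl⟩

theorem Ideal.map_evalRingHom_sup_span_singleton {R : Type*} [CommRing R] (I : Ideal R[X])
    {t t' w : R} (h : w ∣ t - t') :
    I.map (evalRingHom t) ⊔ Ideal.span {w} = I.map (evalRingHom t') ⊔ Ideal.span {w} := by
  suffices key : ∀ t t', w ∣ t - t' →
      I.map (evalRingHom t) ⊔ Ideal.span {w} ≤ I.map (evalRingHom t') ⊔ Ideal.span {w} from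
    le_antisymm (key t t' h) (key t' t (dvd_sub_comm.mp h))
  intro t t' h
  refine sup_le (Ideal.map_le_iff_le_comap.mpr fun f hf => ?_) le_sup_right
  exact Submodule.mem_sup.mpr ⟨f.eval t', Ideal.mem_map_of_mem (evalRingHom t') hf,
    f.eval t - f.eval t', Ideal.mem_span_singleton.mpr (h.trans (sub_dvd_eval_sub t t' f)),
    by simp⟩

theorem stmt_18_general {Z : Type*} [CommRing Z] [IsDomain Z] [IsPrincipalIdealRing Z]
    (s : ℕ) (P : Fin s → Polynomial Z)
    (hcop : ∀ d : Polynomial (FractionRing Z),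
      (∀ i, d ∣ (P i).map (algebraMap Z (FractionRing Z))) → IsUnit d) :
    ∀ m m' : Z, ∃ m'' : Z, ∀ d : Z,
      (∀ i, d ∣ (P i).eval m'') ↔
      ((∀ i, d ∣ (P i).eval m) ∧ (∀ i, d ∣ (P i).eval m')) := by
  intro m m'
  set I := Ideal.span (Set.range P)
  obtain ⟨c, hc0, hcI⟩ := exists_C_mem_of_map_eq_top (K := FractionRing Z) (I := I) (by
    rw [Ideal.map_span, ← Set.range_comp]
    exact Ideal.span_range_eq_top_of_forall_dvd_isUnit _ hcop)
  obtain ⟨M, hM⟩ := exists_eq_sup_of_congr_mod (fun t => I.map (evalRingHom t)) hc0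
    (fun t => by simpa using Ideal.mem_map_of_mem (evalRingHom t) hcI)
    (fun t t' w h => I.map_evalRingHom_sup_span_singleton h) m m'
  refine ⟨M, fun d => ?_⟩
  have hdvd : ∀ t, (∀ i, d ∣ (P i).eval t) ↔ I.map (evalRingHom t) ≤ Ideal.span {d} := by
    intro t
    rw [Ideal.map_span, Ideal.span_le, ← Set.range_comp, Set.range_subset_iff]
    simp [Ideal.mem_span_singleton]
  rw [hdvd, hdvd, hdvd, hM, sup_le_iff]

theorem stmt_18 {Z : Type*} [CommRing Z] [IsDomain Z] [IsPrincipalIdealRing Z]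
    (s : ℕ) (P : Fin s → Polynomial Z) (hP0 : ∀ i, P i ≠ 0)
    (hcop : ∀ d : Polynomial (FractionRing Z),
      (∀ i, d ∣ (P i).map (algebraMap Z (FractionRing Z))) → IsUnit d) :
    ∀ m m' : Z, ∃ m'' : Z, ∀ d : Z,
      (∀ i, d ∣ (P i).eval m'') ↔
      ((∀ i, d ∣ (P i).eval m) ∧ (∀ i, d ∣ (P i).eval m')) :=
  stmt_18_general s P hcop
end
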